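/- (Spectrum of the fully Kekulé-distorted armchair nanoribbon.) Let m, m₅, k₂, Ω ∈ ℝ and W > 0. Suppose there exists a differentiable function φ : ℝ → ℂ⁴, not identically zero on [0, W], satisfying the eigenvalue equation −i·Γ⁰Γ¹·φ'(x) + k₂·Γ⁰Γ²·φ(x) + (m·Γ⁰ + i·m₅·Γ⁰Γ⁵)·φ(x) = Ω·φ(x) for all x ∈ [0, W] together with the armchair boundary conditions (1 + i·Γ¹)·φ(0) = 0 and (1 + i·Γ¹)·φ(W) = 0. Then either Ω² = k₂² + m₅² (gapped edge branch) or there exists a natural number n ≥ 0 such that Ω² = k₂² + m² + m₅² + (n·π/W)² (gapped ordinary branch). In particular the two branches have the two different gaps 2·|m₅| and 2·√(m² + m₅² + π²/W²). -/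

import Mathlib

open Matrix Complex

noncomputable section

/-- The 2×2 identity (σ₀). -/
def σ0 : Matrix (Fin 2) (Fin 2) ℂ := 1
/-- Pauli matrix σ₁. -/
def σ1 : Matrix (Fin 2) (Fin 2) ℂ := !![0, 1; 1, 0]
/-- Pauli matrix σ₂. -/
def σ2 : Matrix (Fin 2) (Fin 2) ℂ := !![0, -Complex.I; Complex.I, 0]
/-- Pauli matrix σ₃. -/
def σ3 : Matrix (Fin 2) (Fin 2) ℂ := !![1, 0; 0, -1]

/-- Kronecker product of two 2×2 complex matrices, as a 4×4 matrix
(the first factor indexes the 2×2 blocks). -/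
def kron (A B : Matrix (Fin 2) (Fin 2) ℂ) : Matrix (Fin 4) (Fin 4) ℂ :=
  !![A 0 0 * B 0 0, A 0 0 * B 0 1, A 0 1 * B 0 0, A 0 1 * B 0 1;
     A 0 0 * B 1 0, A 0 0 * B 1 1, A 0 1 * B 1 0, A 0 1 * B 1 1;
     A 1 0 * B 0 0, A 1 0 * B 0 1, A 1 1 * B 0 0, A 1 1 * B 0 1;
     A 1 0 * B 1 0, A 1 0 * B 1 1, A 1 1 * B 1 0, A 1 1 * B 1 1]

/-- Γ⁰ = −(σ₂ ⊗ σ₁). -/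
def Γ0 : Matrix (Fin 4) (Fin 4) ℂ := -(kron σ2 σ1)
/-- Γ¹ = −i (σ₁ ⊗ σ₀). -/
def Γ1 : Matrix (Fin 4) (Fin 4) ℂ := -(Complex.I • kron σ1 σ0)
/-- Γ² = −i (σ₂ ⊗ σ₃). -/
def Γ2 : Matrix (Fin 4) (Fin 4) ℂ := -(Complex.I • kron σ2 σ3)
/-- Γ³ = −i (σ₂ ⊗ σ₂). -/
def Γ3 : Matrix (Fin 4) (Fin 4) ℂ := -(Complex.I • kron σ2 σ2)
/-- Γ⁵ = i Γ⁰Γ¹Γ²Γ³. -/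
def Γ5 : Matrix (Fin 4) (Fin 4) ℂ := Complex.I • (Γ0 * Γ1 * Γ2 * Γ3)

/-- The free graphene Hamiltonian in momentum space,
H₀(k₁,k₂) = −(k₁ (σ₃ ⊗ σ₁) + k₂ (σ₀ ⊗ σ₂)). -/
def H0 (k1 k2 : ℝ) : Matrix (Fin 4) (Fin 4) ℂ :=
  -((k1 : ℂ) • kron σ3 σ1 + (k2 : ℂ) • kron σ0 σ2)

set_option maxHeartbeats 1000000 in
lemma G0e' : Γ0 = !![0,0,0,Complex.I; 0,0,Complex.I,0; 0,-Complex.I,0,0; -Complex.I,0,0,0] := by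
  ext i j
  fin_cases i <;> fin_cases j <;>
    simp [Γ0, kron, σ1, σ2, Matrix.vecHead, Matrix.vecTail]

set_option maxHeartbeats 1000000 in
lemma G1e' : Γ1 = !![0,0,-Complex.I,0; 0,0,0,-Complex.I; -Complex.I,0,0,0; 0,-Complex.I,0,0] := by
  ext i j
  fin_cases i <;> fin_cases j <;>
    simp [Γ1, kron, σ0, σ1, Matrix.vecHead, Matrix.vecTail, Matrix.one_apply]

set_option maxHeartbeats 1000000 in
lemma G2e' : Γ2 = !![0,0,-1,0; 0,0,0,1; 1,0,0,0; 0,-1,0,0] := by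
  ext i j
  fin_cases i <;> fin_cases j <;>
    simp [Γ2, kron, σ2, σ3, Matrix.vecHead, Matrix.vecTail] <;>
    simp [Complex.ext_iff]

set_option maxHeartbeats 1000000 in
lemma G3e' : Γ3 = !![0,0,0,Complex.I; 0,0,-Complex.I,0; 0,-Complex.I,0,0; Complex.I,0,0,0] := by
  ext i j
  fin_cases i <;> fin_cases j <;>
    simp [Γ3, kron, σ2, Matrix.vecHead, Matrix.vecTail] <;>
    simp [Complex.ext_iff]

set_option maxHeartbeats 1000000 in
lemma G01' : Γ0 * Γ1 = !![0,1,0,0; 1,0,0,0; 0,0,0,-1; 0,0,-1,0] := by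
  rw [G0e', G1e']
  ext i j
  fin_cases i <;> fin_cases j <;>
    simp [Matrix.mul_apply, Fin.sum_univ_four, Matrix.vecHead, Matrix.vecTail] <;>
    simp [Complex.ext_iff]

set_option maxHeartbeats 1000000 in
lemma G02' : Γ0 * Γ2 = !![0,-Complex.I,0,0; Complex.I,0,0,0; 0,0,0,-Complex.I; 0,0,Complex.I,0] := by
  rw [G0e', G2e']
  ext i j
  fin_cases i <;> fin_cases j <;>
    simp [Matrix.mul_apply, Fin.sum_univ_four, Matrix.vecHead, Matrix.vecTail]

set_option maxHeartbeats 1000000 in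
lemma G5e' : Γ5 = !![-1,0,0,0; 0,-1,0,0; 0,0,1,0; 0,0,0,1] := by
  have h23 : Γ2 * Γ3 = !![0,Complex.I,0,0; Complex.I,0,0,0; 0,0,0,Complex.I; 0,0,Complex.I,0] := by
    rw [G2e', G3e']
    ext i j
    fin_cases i <;> fin_cases j <;>
      simp [Matrix.mul_apply, Fin.sum_univ_four, Matrix.vecHead, Matrix.vecTail]
  rw [Γ5, mul_assoc, G01', h23]
  ext i j
  fin_cases i <;> fin_cases j <;>
    simp [Matrix.mul_apply, Fin.sum_univ_four, Matrix.vecHead, Matrix.vecTail] <;>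
    simp [Complex.ext_iff]

set_option maxHeartbeats 1000000 in
lemma G05' : Γ0 * Γ5 = !![0,0,0,Complex.I; 0,0,Complex.I,0; 0,Complex.I,0,0; Complex.I,0,0,0] := by
  rw [G0e', G5e']
  ext i j
  fin_cases i <;> fin_cases j <;>
    simp [Matrix.mul_apply, Fin.sum_univ_four, Matrix.vecHead, Matrix.vecTail]

/-- The coefficient matrix of the first-order ODE φ' = A φ. -/
def Amat (m m5 k2 Ω : ℝ) : Matrix (Fin 4) (Fin 4) ℂ :=
  !![(k2:ℂ), Complex.I*Ω, Complex.I*m5+m, 0;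
     Complex.I*Ω, -(k2:ℂ), 0, Complex.I*m5+m;
     -(Complex.I*m5)+m, 0, -(k2:ℂ), -(Complex.I*Ω);
     0, -(Complex.I*m5)+m, -(Complex.I*Ω), (k2:ℂ)]

set_option maxHeartbeats 1000000 in
lemma Amat_sq (m m5 k2 Ω : ℝ) :
    Amat m m5 k2 Ω * Amat m m5 k2 Ω = ((k2^2+m^2+m5^2-Ω^2 : ℝ) : ℂ) • 1 := by
  ext i j
  fin_cases i <;> fin_cases j <;>
    simp [Amat, Matrix.mul_apply, Fin.sum_univ_four, Matrix.vecHead, Matrix.vecTail,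
      Matrix.one_apply, pow_two] <;>
    simp [Complex.ext_iff, pow_two] <;> first | (constructor <;> ring) | ring

set_option maxHeartbeats 1000000 in
/-- Rearranging the eigenvalue equation into explicit first-order form. -/
lemma kas_deriv_eq (m m5 k2 Ω : ℝ) (d w : Fin 4 → ℂ)
    (h : (-Complex.I) • (Γ0 * Γ1).mulVec d
        + (k2 : ℂ) • (Γ0 * Γ2).mulVec w
        + ((m : ℂ) • Γ0 + (Complex.I * (m5 : ℂ)) • (Γ0 * Γ5)).mulVec w
      = ((Ω : ℝ) : ℂ) • w) :
    d = (Amat m m5 k2 Ω).mulVec w := by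
  rw [G01', G02', G05', G0e'] at h
  have h0 := congrFun h 0
  have h1 := congrFun h 1
  have h2 := congrFun h 2
  have h3 := congrFun h 3
  simp [Matrix.mulVec, dotProduct, Fin.sum_univ_four, Matrix.vecHead, Matrix.vecTail,
    Matrix.add_apply, Pi.add_apply, Pi.smul_apply, smul_eq_mul] at h0 h1 h2 h3
  funext j
  fin_cases j <;>
    simp [Amat, Matrix.mulVec, dotProduct, Fin.sum_univ_four, Matrix.vecHead,
      Matrix.vecTail] <;>
  · simp only [Complex.ext_iff] at h0 h1 h2 h3 ⊢
    simp only [Complex.add_re, Complex.add_im, Complex.mul_re, Complex.mul_im, Complex.neg_re,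
      Complex.neg_im, Complex.I_re, Complex.I_im, Complex.ofReal_re, Complex.ofReal_im,
      Complex.zero_re, Complex.zero_im] at h0 h1 h2 h3 ⊢
    constructor <;> linarith [h0.1, h0.2, h1.1, h1.2, h2.1, h2.2, h3.1, h3.2]

/-- Representation of solutions of the constant-coefficient linear ODE `φ' = A φ`
with `A² = -q²`. -/
lemma ode_rep (A : Matrix (Fin 4) (Fin 4) ℂ) (q : ℂ)
    (hA2 : A * A = (-(q^2)) • 1)
    (φ : ℝ → Fin 4 → ℂ) (hdiff : Differentiable ℝ φ) (W : ℝ)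
    (hA : ∀ x ∈ Set.Icc (0:ℝ) W, deriv φ x = A.mulVec (φ x)) :
    ∀ x ∈ Set.Icc (0:ℝ) W, φ x =
      Complex.cos (q*(x:ℂ)) • φ 0
        + (if q = 0 then ((x:ℝ):ℂ) else Complex.sin (q*(x:ℂ))/q) • A.mulVec (φ 0) := by
  classical
  set v := φ 0 with hv
  set w := A.mulVec v with hw
  set sQ : ℝ → ℂ := fun x => if q = 0 then ((x:ℝ):ℂ) else Complex.sin (q*(x:ℂ))/q with hsQdef
  set ψ : ℝ → Fin 4 → ℂ := fun x => Complex.cos (q*(x:ℂ)) • v + sQ x • w with hψdef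
  have hlin : ∀ x : ℝ, HasDerivAt (fun y : ℝ => q * (y:ℂ)) q x := by
    intro x
    have h1 : HasDerivAt (fun y : ℝ => ((y:ℝ):ℂ)) 1 x := by
      simpa using (hasDerivAt_id x).ofReal_comp
    simpa using h1.const_mul q
  have hcos : ∀ x : ℝ, HasDerivAt (fun y : ℝ => Complex.cos (q*(y:ℂ)))
      (-Complex.sin (q*(x:ℂ)) * q) x := by
    intro x
    exact (Complex.hasDerivAt_cos (q*(x:ℂ))).comp x (hlin x)
  have hsin : ∀ x : ℝ, HasDerivAt (fun y : ℝ => Complex.sin (q*(y:ℂ)))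
      (Complex.cos (q*(x:ℂ)) * q) x := by
    intro x
    exact (Complex.hasDerivAt_sin (q*(x:ℂ))).comp x (hlin x)
  have hsQ : ∀ x : ℝ, HasDerivAt sQ (Complex.cos (q*(x:ℂ))) x := by
    intro x
    by_cases hq : q = 0
    · have : HasDerivAt (fun y : ℝ => ((y:ℝ):ℂ)) 1 x := by
        simpa using (hasDerivAt_id x).ofReal_comp
      simp only [hsQdef, if_pos hq]
      simpa [hq] using this
    · have := (hsin x).div_const q
      simp only [hsQdef, if_neg hq]
      simpa [mul_div_assoc, div_self hq] using this
  have hAw : A.mulVec w = (-(q^2)) • v := by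
    rw [hw, Matrix.mulVec_mulVec, hA2, Matrix.smul_mulVec, Matrix.one_mulVec]
  have hcs : ∀ x : ℝ, -Complex.sin (q*(x:ℂ)) * q = sQ x * (-(q^2)) := by
    intro x
    by_cases hq : q = 0
    · simp [hsQdef, hq]
    · simp only [hsQdef, if_neg hq]
      field_simp
  have hψd : ∀ x : ℝ, HasDerivAt ψ (A.mulVec (ψ x)) x := by
    intro x
    have d1 := (hcos x).smul_const v
    have d2 := (hsQ x).smul_const w
    have hsum := d1.add d2
    have : A.mulVec (ψ x)
        = (-Complex.sin (q*(x:ℂ)) * q) • v + Complex.cos (q*(x:ℂ)) • w := by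
      show A.mulVec (Complex.cos (q*(x:ℂ)) • v + sQ x • w) = _
      rw [Matrix.mulVec_add, Matrix.mulVec_smul, Matrix.mulVec_smul, ← hw, hAw,
        smul_smul, hcs x, add_comm]
    rw [this]
    exact hsum
  -- uniqueness
  set L := LinearMap.toContinuousLinearMap (Matrix.mulVecLin A) with hL
  have hcoe : (⇑L : (Fin 4 → ℂ) → (Fin 4 → ℂ)) = fun y => A.mulVec y := by
    funext y
    simp [hL]
  have hlip : ∀ t : ℝ, LipschitzWith ‖L‖₊ (fun y : Fin 4 → ℂ => A.mulVec y) := by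
    intro t
    rw [← hcoe]
    exact L.lipschitz
  have hψdiff : Differentiable ℝ ψ := fun x => (hψd x).differentiableAt
  have heqon : Set.EqOn φ ψ (Set.Icc 0 W) := by
    apply ODE_solution_unique (v := fun _ y => A.mulVec y) hlip
      (hdiff.continuous.continuousOn)
      (fun t ht => by
        have := (hdiff t).hasDerivAt
        rw [hA t (Set.Ico_subset_Icc_self ht)] at this
        exact this.hasDerivWithinAt)
      (hψdiff.continuous.continuousOn)
      (fun t _ => (hψd t).hasDerivWithinAt)
    show v = ψ 0
    have hs0 : sQ 0 = 0 := by
      by_cases hq : q = 0 <;> simp [hsQdef, hq]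
    simp [hψdef, hs0]
  intro x hx
  exact heqon hx

/-- Linear algebra of the edge branch. -/
lemma edge_branch (k2 m5 Ω : ℝ) (v0 v1 : ℂ) (hvne : ¬(v0 = 0 ∧ v1 = 0))
    (e1 : ((k2:ℂ) - Complex.I*m5) * v0 + Complex.I*Ω*v1 = 0)
    (e2 : Complex.I*Ω*v0 - ((k2:ℂ) + Complex.I*m5) * v1 = 0) :
    Ω^2 = k2^2 + m5^2 := by
  have h0 : ((k2:ℂ)^2 + (m5:ℂ)^2 - (Ω:ℂ)^2) * v0 = 0 := by
    linear_combination ((k2:ℂ)+Complex.I*m5)*e1 + (Complex.I*(Ω:ℂ))*e2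
      + (((m5:ℂ)^2-(Ω:ℂ)^2)*v0)*Complex.I_sq
  have h1 : ((k2:ℂ)^2 + (m5:ℂ)^2 - (Ω:ℂ)^2) * v1 = 0 := by
    linear_combination (Complex.I*(Ω:ℂ))*e1 - ((k2:ℂ)-Complex.I*m5)*e2
      + (((m5:ℂ)^2-(Ω:ℂ)^2)*v1)*Complex.I_sq
  have hkey : ((k2:ℂ)^2 + (m5:ℂ)^2 - (Ω:ℂ)^2) = 0 := by
    rcases not_and_or.mp hvne with h | h
    · rcases mul_eq_zero.mp h0 with h' | h'
      · exact h'
      · exact absurd h' h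
    · rcases mul_eq_zero.mp h1 with h' | h'
      · exact h'
      · exact absurd h' h
  have : (((k2^2 + m5^2 - Ω^2 : ℝ)) : ℂ) = 0 := by push_cast; linear_combination hkey
  have hr : k2^2 + m5^2 - Ω^2 = 0 := by exact_mod_cast this
  linarith

set_option maxHeartbeats 1000000 in
/-- spectrum of the fully Kekulé-distorted armchair nanoribbon. -/
theorem kekule_armchair_spectrum
    (m m5 k2 Ω W : ℝ) (hW : W > 0)
    (φ : ℝ → Fin 4 → ℂ) (hdiff : Differentiable ℝ φ)
    (hnz : ∃ x ∈ Set.Icc (0 : ℝ) W, φ x ≠ 0)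
    (heq : ∀ x ∈ Set.Icc (0 : ℝ) W,
      (-Complex.I) • (Γ0 * Γ1).mulVec (deriv φ x)
        + (k2 : ℂ) • (Γ0 * Γ2).mulVec (φ x)
        + ((m : ℂ) • Γ0 + (Complex.I * (m5 : ℂ)) • (Γ0 * Γ5)).mulVec (φ x)
      = ((Ω : ℝ) : ℂ) • φ x)
    (hbc0 : ((1 : Matrix (Fin 4) (Fin 4) ℂ) + Complex.I • Γ1).mulVec (φ 0) = 0)
    (hbcW : ((1 : Matrix (Fin 4) (Fin 4) ℂ) + Complex.I • Γ1).mulVec (φ W) = 0) :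
    Ω ^ 2 = k2 ^ 2 + m5 ^ 2 ∨
    ∃ n : ℕ, Ω ^ 2 = k2 ^ 2 + m ^ 2 + m5 ^ 2 + ((n : ℝ) * Real.pi / W) ^ 2 := by
  classical
  set c : ℝ := Ω^2 - k2^2 - m^2 - m5^2 with hc
  set A : Matrix (Fin 4) (Fin 4) ℂ := Amat m m5 k2 Ω with hAdef
  set q : ℂ := if 0 ≤ c then ((Real.sqrt c : ℝ) : ℂ) else Complex.I * ((Real.sqrt (-c) : ℝ) : ℂ)
    with hqdef
  have hq2 : q^2 = (c : ℂ) := by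
    by_cases h : 0 ≤ c
    · rw [hqdef, if_pos h, ← Complex.ofReal_pow, Real.sq_sqrt h]
    · rw [hqdef, if_neg h]
      have h' : (0:ℝ) ≤ -c := by linarith
      have : ((Real.sqrt (-c) : ℝ) : ℂ)^2 = ((-c : ℝ) : ℂ) := by
        rw [← Complex.ofReal_pow, Real.sq_sqrt h']
      rw [mul_pow, this, Complex.I_sq]
      push_cast
      ring
  have hA2 : A * A = (-(q^2)) • 1 := by
    rw [hq2, hAdef, Amat_sq]
    norm_cast
    rw [hc]
    ring_nf
  have hA : ∀ x ∈ Set.Icc (0:ℝ) W, deriv φ x = A.mulVec (φ x) :=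
    fun x hx => kas_deriv_eq m m5 k2 Ω _ _ (heq x hx)
  have hrep := ode_rep A q hA2 φ hdiff W hA
  set v : Fin 4 → ℂ := φ 0 with hvdef
  -- the initial value is nonzero
  have hv0 : v ≠ 0 := by
    intro h0
    obtain ⟨x, hx, hxne⟩ := hnz
    apply hxne
    rw [hrep x hx, h0]
    simp
  -- boundary condition at W
  have hWmem : W ∈ Set.Icc (0:ℝ) W := ⟨le_of_lt hW, le_refl W⟩
  have hφW := hrep W hWmem
  set s : ℂ := if q = 0 then ((W:ℝ):ℂ) else Complex.sin (q*(W:ℂ))/q with hsdef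
  rw [hφW, Matrix.mulVec_add, Matrix.mulVec_smul, Matrix.mulVec_smul, hbc0, smul_zero,
    zero_add] at hbcW
  rcases smul_eq_zero.mp hbcW with hs | hPA
  · -- ordinary branch: sin(qW) = 0 with q ≠ 0
    right
    have hqne : q ≠ 0 := by
      intro hq0
      rw [hsdef, if_pos hq0] at hs
      exact (Complex.ofReal_ne_zero.mpr (ne_of_gt hW)) hs
    rw [hsdef, if_neg hqne, div_eq_zero_iff] at hs
    have hsin : Complex.sin (q*(W:ℂ)) = 0 := by tauto
    obtain ⟨k, hk⟩ := Complex.sin_eq_zero_iff.mp hsin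
    have hWne : ((W:ℝ):ℂ) ≠ 0 := Complex.ofReal_ne_zero.mpr (ne_of_gt hW)
    have hqval : q = ((k:ℝ):ℂ) * ((Real.pi : ℝ):ℂ) / ((W:ℝ):ℂ) := by
      field_simp
      push_cast at hk ⊢
      linear_combination hk
    have hcq : ((((k:ℝ) * Real.pi / W)^2 : ℝ) : ℂ) = (c : ℂ) := by
      rw [← hq2, hqval]
      push_cast
      ring
    have hcr : ((k:ℝ) * Real.pi / W)^2 = c := by exact_mod_cast hcq
    refine ⟨k.natAbs, ?_⟩
    have habs : ((k.natAbs : ℝ))^2 = ((k:ℝ))^2 := by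
      rw [Nat.cast_natAbs, Int.cast_abs]
      exact _root_.sq_abs ((k:ℝ))
    have : ((k.natAbs : ℝ) * Real.pi / W)^2 = ((k:ℝ) * Real.pi / W)^2 := by
      rw [div_pow, div_pow, mul_pow, mul_pow, habs]
    rw [this, hcr, hc]
    ring
  · -- edge branch
    left
    have hb0 := congrFun hbc0 0
    have hb1 := congrFun hbc0 1
    have hp0 := congrFun hPA 0
    have hp1 := congrFun hPA 1
    rw [G1e'] at hb0 hb1 hp0 hp1
    simp [Matrix.mulVec, dotProduct, Fin.sum_univ_four, Matrix.vecHead, Matrix.vecTail,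
      Matrix.add_apply, Matrix.one_apply, hAdef, Amat, ← hvdef] at hb0 hb1 hp0 hp1
    have hv2 : v 2 = -v 0 := by linear_combination hb0
    have hv3 : v 3 = -v 1 := by linear_combination hb1
    rw [hv2, hv3] at hp0 hp1
    have hvne : ¬(v 0 = 0 ∧ v 1 = 0) := by
      intro ⟨h0, h1⟩
      apply hv0
      funext j
      fin_cases j <;> simp [h0, h1, hv2, hv3]
    refine edge_branch k2 m5 Ω (v 0) (v 1) hvne ?_ ?_
    · linear_combination hp0 / 2
    · linear_combination hp1 / 2
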